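/- Let S be a right-sided convex point set of n points in general position and let P = d_1,...,d_{n-1} be a path with all labels in {U,D,R}. Then P admits a planar direction-consistent embedding E on S such that E(v_1) = b(S) if d_1 = U, E(v_1) = t(S) if d_1 = D, and E(v_1) = ℓ(S) ∈ {t(S), b(S)} if d_1 = R. -/

import Mathlib

/-- Edge direction labels. -/
inductive Dir | U | D | L | R
deriving DecidableEq

/-- Opposite label: U↔D, L↔R. -/
def Dir.opp : Dir → Dir
  | .U => .D | .D => .U | .L => .R | .R => .L

/-- Label after counterclockwise rotation by π/2: U↦L, D↦R, R↦U, L↦D. -/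
def Dir.rot : Dir → Dir
  | .U => .L | .D => .R | .R => .U | .L => .D

/-- Label after vertical-line reflection: U↦U, D↦D, R↦L, L↦R. -/
def Dir.mir : Dir → Dir
  | .U => .U | .D => .D | .R => .L | .L => .R

/-- An edge from `a` to `b` is consistent with a direction label. -/
def dirOk : Dir → ℝ × ℝ → ℝ × ℝ → Prop
  | .U, a, b => a.2 < b.2
  | .D, a, b => b.2 < a.2
  | .R, a, b => a.1 < b.1
  | .L, a, b => b.1 < a.1

/-- The drawing of a path with edge labels `d` and vertex placement `E` is
direction-consistent. -/
def DirConsistent {m : ℕ} (d : Fin m → Dir) (E : Fin (m + 1) → ℝ × ℝ) : Prop :=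
  ∀ i : Fin m, dirOk (d i) (E i.castSucc) (E i.succ)

/-- The straight-line drawing of the path with vertex placement `E` is planar:
non-adjacent segments are disjoint; adjacent segments meet only at the shared endpoint. -/
def PlanarDrawing {m : ℕ} (E : Fin (m + 1) → ℝ × ℝ) : Prop :=
  (∀ i j : Fin m, (i : ℕ) + 1 < (j : ℕ) →
    segment ℝ (E i.castSucc) (E i.succ) ∩ segment ℝ (E j.castSucc) (E j.succ) = ∅) ∧
  (∀ i j : Fin m, (i : ℕ) + 1 = (j : ℕ) →
    segment ℝ (E i.castSucc) (E i.succ) ∩ segment ℝ (E j.castSucc) (E j.succ) = {E i.succ})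

/-- `E` is an embedding of the path vertices onto the point set `S`. -/
def EmbOn {m : ℕ} (E : Fin (m + 1) → ℝ × ℝ) (S : Set (ℝ × ℝ)) : Prop :=
  Function.Injective E ∧ Set.range E = S

/-- Planar direction-consistent embedding of the labeled path `d` on `S`. -/
def PDCE {m : ℕ} (d : Fin m → Dir) (E : Fin (m + 1) → ℝ × ℝ) (S : Set (ℝ × ℝ)) : Prop :=
  EmbOn E S ∧ DirConsistent d E ∧ PlanarDrawing E

/-- `S` is in convex position. -/
def ConvexPos (S : Set (ℝ × ℝ)) : Prop :=
  ConvexIndependent ℝ ((↑) : S → ℝ × ℝ)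

/-- No three distinct points of `S` are collinear. -/
def NoThreeCollinear (S : Set (ℝ × ℝ)) : Prop :=
  ∀ p ∈ S, ∀ q ∈ S, ∀ r ∈ S, p ≠ q → p ≠ r → q ≠ r →
    ¬ Collinear ℝ ({p, q, r} : Set (ℝ × ℝ))

/-- General position: no three collinear, no two points with equal x- or y-coordinate. -/
def GenPos (S : Set (ℝ × ℝ)) : Prop :=
  NoThreeCollinear S ∧ ∀ p ∈ S, ∀ q ∈ S, p ≠ q → p.1 ≠ q.1 ∧ p.2 ≠ q.2

def IsTopmost (S : Set (ℝ × ℝ)) (t : ℝ × ℝ) : Prop :=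
  t ∈ S ∧ ∀ p ∈ S, p ≠ t → p.2 < t.2
def IsBottommost (S : Set (ℝ × ℝ)) (b : ℝ × ℝ) : Prop :=
  b ∈ S ∧ ∀ p ∈ S, p ≠ b → b.2 < p.2
def IsLeftmost (S : Set (ℝ × ℝ)) (l : ℝ × ℝ) : Prop :=
  l ∈ S ∧ ∀ p ∈ S, p ≠ l → l.1 < p.1
def IsRightmost (S : Set (ℝ × ℝ)) (r : ℝ × ℝ) : Prop :=
  r ∈ S ∧ ∀ p ∈ S, p ≠ r → p.1 < r.1

/-- Cross product telling on which side of the directed line `a → b` the point `p` lies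
(`0 < cross a b p` means `p` is strictly to the left). -/
def cross (a b p : ℝ × ℝ) : ℝ :=
  (b.1 - a.1) * (p.2 - a.2) - (b.2 - a.2) * (p.1 - a.1)

/-- With `b` bottommost and `t` topmost, all other points lie strictly to the left of the
line through `b` and `t`. -/
def LeftSided (S : Set (ℝ × ℝ)) (b t : ℝ × ℝ) : Prop :=
  IsBottommost S b ∧ IsTopmost S t ∧ ∀ p ∈ S, p ≠ b → p ≠ t → 0 < cross b t p

/-- With `b` bottommost and `t` topmost, all other points lie strictly to the right of the
line through `b` and `t`. -/
def RightSided (S : Set (ℝ × ℝ)) (b t : ℝ × ℝ) : Prop :=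
  IsBottommost S b ∧ IsTopmost S t ∧ ∀ p ∈ S, p ≠ b → p ≠ t → cross b t p < 0

/-- Two points of `S` are consecutive on the convex hull of `S`: all other points of `S`
lie strictly on one side of the line through them. -/
def HullConsecutive (S : Set (ℝ × ℝ)) (p q : ℝ × ℝ) : Prop :=
  p ∈ S ∧ q ∈ S ∧ p ≠ q ∧
    ((∀ r ∈ S, r ≠ p → r ≠ q → 0 < cross p q r) ∨
     (∀ r ∈ S, r ≠ p → r ≠ q → cross p q r < 0))

/-- Strip-convex point set with bottommost `b`, leftmost `l`, topmost `t`, rightmost `r`: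
`b` and `l` coincide or are hull-consecutive, and so do `t` and `r`. -/
def StripConvex (S : Set (ℝ × ℝ)) (b l t r : ℝ × ℝ) : Prop :=
  IsBottommost S b ∧ IsLeftmost S l ∧ IsTopmost S t ∧ IsRightmost S r ∧
    (b = l ∨ HullConsecutive S b l) ∧ (t = r ∨ HullConsecutive S t r)

/-- `T` is a consecutive subset of the convex point set `S` along its hull:
it can be separated from `S \ T` by a line. -/
def Consecutive (S T : Set (ℝ × ℝ)) : Prop :=
  T ⊆ S ∧ ∃ f : (ℝ × ℝ) →ₗ[ℝ] ℝ, ∃ c : ℝ,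
    (∀ p ∈ T, c < f p) ∧ ∀ p ∈ S \ T, f p < c

/-!
Ordered by height, the points of a right-sided convex set form a chain: every point lies
strictly to the right of the line through any point below it and any point above it
(otherwise it would be in the convex hull of the others). Removing the bottommost or topmost
point therefore leaves a right-sided set, and the removed point is hull-consecutive with both
the new bottommost and the new topmost point.

The embedding is built greedily: the first vertex goes to `b(S)`, `t(S)` or the leftmost point
(which is one of them) according to the first label, and the rest of the path is embedded
recursively on the remaining points starting from their bottommost or topmost point. The first
edge joins two hull-consecutive points, so the rest of the drawing lies strictly on one side of
its line and cannot cross it.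
-/

lemma cross_self_left (a b : ℝ × ℝ) : cross a b a = 0 := by unfold cross; ring

lemma cross_self_right (a b : ℝ × ℝ) : cross a b b = 0 := by unfold cross; ring

lemma cross_swap (a b p : ℝ × ℝ) : cross b a p = -cross a b p := by unfold cross; ring

lemma cross_swap_right (a b p : ℝ × ℝ) : cross a p b = -cross a b p := by unfold cross; ring

lemma cross_rotate (a b p : ℝ × ℝ) : cross b p a = cross a b p := by unfold cross; ring

def crossAffine (a b : ℝ × ℝ) : ℝ × ℝ →ᵃ[ℝ] ℝ where
  toFun := cross a b
  linear := (b.1 - a.1) • LinearMap.snd ℝ ℝ ℝ - (b.2 - a.2) • LinearMap.fst ℝ ℝ ℝ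
  map_vadd' p w := by simp [cross]; ring

@[simp] lemma crossAffine_apply (a b p : ℝ × ℝ) : crossAffine a b p = cross a b p := rfl

lemma collinear_of_cross_eq_zero {a b c : ℝ × ℝ} (hab : a.2 ≠ b.2) (h : cross a b c = 0) :
    Collinear ℝ ({a, b, c} : Set (ℝ × ℝ)) := by
  rw [collinear_iff_of_mem (Set.mem_insert a {b, c})]
  have hba : b.2 - a.2 ≠ 0 := sub_ne_zero.2 hab.symm
  refine ⟨b - a, fun p hp => ?_⟩
  simp only [Set.mem_insert_iff, Set.mem_singleton_iff] at hp
  rcases hp with rfl | rfl | rfl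
  · exact ⟨0, by simp⟩
  · exact ⟨1, by simp⟩
  · refine ⟨(p.2 - a.2) / (b.2 - a.2), Prod.ext ?_ ?_⟩ <;> simp only [cross] at h <;>
      simp only [vadd_eq_add, Prod.fst_add, Prod.snd_add, Prod.smul_fst, Prod.smul_snd,
        smul_eq_mul, Prod.fst_sub, Prod.snd_sub] <;> field_simp
    · linear_combination -h
    · ring

lemma exists_mem_segment_snd_eq {a c q : ℝ × ℝ} (ha : a.2 ≤ q.2) (hc : q.2 ≤ c.2)
    (hac : a.2 < c.2) :
    ∃ p ∈ segment ℝ a c, p.2 = q.2 ∧ (p.1 - q.1) * (c.2 - a.2) = cross a c q := by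
  have hpos : 0 < c.2 - a.2 := sub_pos.2 hac
  set θ := (q.2 - a.2) / (c.2 - a.2)
  have hθ : θ ∈ Set.Icc (0 : ℝ) 1 :=
    ⟨div_nonneg (by linarith) hpos.le, (div_le_one hpos).2 (by linarith)⟩
  refine ⟨AffineMap.lineMap a c θ, lineMap_mem_segment ℝ a c hθ, ?_, ?_⟩ <;>
    simp only [AffineMap.lineMap_apply_module, Prod.fst_add, Prod.snd_add, Prod.smul_fst,
      Prod.smul_snd, smul_eq_mul, cross, θ] <;> field_simp <;> ring

lemma mem_segment_of_snd_eq {p p' q : ℝ × ℝ} (hp : p.2 = q.2) (hp' : p'.2 = q.2)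
    (h : p.1 ≤ q.1) (h' : q.1 ≤ p'.1) : q ∈ segment ℝ p p' := by
  rw [← Prod.mk.eta (p := p), ← Prod.mk.eta (p := p'), ← Prod.mk.eta (p := q), hp, hp',
    ← Prod.image_mk_segment_left, segment_eq_Icc (h.trans h')]
  exact ⟨q.1, ⟨h, h'⟩, rfl⟩

section Segment

variable {E : Type*} [AddCommGroup E] [Module ℝ E]

lemma AffineMap.pos_of_mem_segment (f : E →ᵃ[ℝ] ℝ) {x y z : E} (hx : 0 < f x) (hy : 0 < f y)
    (hz : z ∈ segment ℝ x y) : 0 < f z :=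
  ((convex_Ioi 0).affine_preimage f).segment_subset hx hy hz

lemma AffineMap.eq_zero_of_mem_segment (f : E →ᵃ[ℝ] ℝ) {x y z : E} (hx : f x = 0) (hy : f y = 0)
    (hz : z ∈ segment ℝ x y) : f z = 0 :=
  ((convex_singleton 0).affine_preimage f).segment_subset hx hy hz

lemma AffineMap.eq_left_of_mem_segment (f : E →ᵃ[ℝ] ℝ) {x y z : E} (hxy : f x ≠ f y)
    (hz : z ∈ segment ℝ x y) (hfz : f z = f x) : z = x := by
  rw [segment_eq_image_lineMap] at hz
  obtain ⟨θ, -, rfl⟩ := hz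
  rw [AffineMap.apply_lineMap, AffineMap.lineMap_apply_module] at hfz
  have hθ : θ = 0 := by
    have : θ * (f y - f x) = 0 := by linear_combination hfz
    exact (mul_eq_zero.1 this).resolve_right (sub_ne_zero.2 hxy.symm)
  rw [hθ, AffineMap.lineMap_apply_zero]

end Segment

lemma PlanarDrawing.cons {m : ℕ} {E : Fin (m + 1) → ℝ × ℝ} (hE : PlanarDrawing E) {v : ℝ × ℝ}
    (f : ℝ × ℝ →ᵃ[ℝ] ℝ) (hv : f v = 0) (h0 : f (E 0) = 0) (hpos : ∀ k ≠ 0, 0 < f (E k)) :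
    PlanarDrawing (Fin.cons v E : Fin (m + 2) → ℝ × ℝ) := by
  have hfirst : ∀ z ∈ segment ℝ v (E 0), f z = 0 := fun z hz => f.eq_zero_of_mem_segment hv h0 hz
  refine ⟨fun i j hij => ?_, fun i j hij => ?_⟩
  · induction j using Fin.cases with
    | zero => simp at hij
    | succ l =>
      induction i using Fin.cases with
      | succ k =>
        simp only [Fin.val_succ] at hij
        simpa only [← Fin.succ_castSucc, Fin.cons_succ] using hE.1 k l (by omega)
      | zero =>
        have hlc : l.castSucc ≠ 0 := by simp [Fin.ext_iff] at hij ⊢; omega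
        simp only [Fin.castSucc_zero, Fin.cons_zero, Fin.cons_succ, ← Fin.succ_castSucc]
        refine Set.eq_empty_iff_forall_notMem.2 fun z ⟨hz, hz'⟩ => ?_
        have := f.pos_of_mem_segment (hpos _ hlc) (hpos _ (Fin.succ_ne_zero l)) hz'
        linarith [hfirst z hz]
  · induction j using Fin.cases with
    | zero => simp at hij
    | succ l =>
      induction i using Fin.cases with
      | succ k =>
        simp only [Fin.val_succ] at hij
        simpa only [← Fin.succ_castSucc, Fin.cons_succ] using hE.2 k l (by omega)
      | zero =>
        have hlc : l.castSucc = 0 := by simp [Fin.ext_iff] at hij ⊢; omega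
        simp only [Fin.castSucc_zero, Fin.cons_zero, Fin.cons_succ, ← Fin.succ_castSucc, hlc]
        refine Set.Subset.antisymm (fun z ⟨hz, hz'⟩ => ?_) ?_
        · exact f.eq_left_of_mem_segment (by rw [h0]; exact (hpos _ l.succ_ne_zero).ne) hz'
            (by rw [hfirst z hz, h0])
        · simp [right_mem_segment, left_mem_segment]

lemma EmbOn.cons {m : ℕ} {E : Fin (m + 1) → ℝ × ℝ} {S : Set (ℝ × ℝ)} {v : ℝ × ℝ}
    (hE : EmbOn E (S \ {v})) (hv : v ∈ S) : EmbOn (Fin.cons v E : Fin (m + 2) → ℝ × ℝ) S := by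
  refine ⟨Fin.cons_injective_iff.2 ⟨by simp [hE.2], hE.1⟩, ?_⟩
  rw [Fin.range_cons, hE.2, Set.insert_sdiff_singleton, Set.insert_eq_self.2 hv]

lemma DirConsistent.cons {m : ℕ} {d : Fin (m + 1) → Dir} {E : Fin (m + 1) → ℝ × ℝ}
    (hE : DirConsistent (fun i => d i.succ) E) {v : ℝ × ℝ} (hv : dirOk (d 0) v (E 0)) :
    DirConsistent d (Fin.cons v E : Fin (m + 2) → ℝ × ℝ) := by
  intro i
  induction i using Fin.cases with
  | zero => simpa using hv
  | succ k => simpa only [← Fin.succ_castSucc, Fin.cons_succ] using hE k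

lemma PDCE.cons {m : ℕ} {d : Fin (m + 1) → Dir} {E : Fin (m + 1) → ℝ × ℝ} {S : Set (ℝ × ℝ)}
    {v : ℝ × ℝ} (hE : PDCE (fun i => d i.succ) E (S \ {v})) (hv : v ∈ S)
    (hdir : dirOk (d 0) v (E 0)) (hhull : HullConsecutive S v (E 0)) :
    PDCE d (Fin.cons v E : Fin (m + 2) → ℝ × ℝ) S := by
  obtain ⟨hemb, hdc, hplanar⟩ := hE
  obtain ⟨-, -, -, hside⟩ := hhull
  have hrest : ∀ k ≠ 0, E k ∈ S ∧ E k ≠ v ∧ E k ≠ E 0 := fun k hk => by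
    obtain ⟨hkS, hkv⟩ : E k ∈ S \ {v} := hemb.2 ▸ Set.mem_range_self k
    exact ⟨hkS, hkv, fun h => hk (hemb.1 h)⟩
  refine ⟨hemb.cons hv, hdc.cons hdir, ?_⟩
  rcases hside with hpos | hneg
  · exact hplanar.cons (crossAffine v (E 0)) (cross_self_left _ _) (cross_self_right _ _)
      fun k hk => hpos _ (hrest k hk).1 (hrest k hk).2.1 (hrest k hk).2.2
  · exact hplanar.cons (-crossAffine v (E 0)) (by simp [cross_self_left])
      (by simp [cross_self_right])
      fun k hk => by simpa using hneg _ (hrest k hk).1 (hrest k hk).2.1 (hrest k hk).2.2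

section Extreme

variable {S : Set (ℝ × ℝ)}

lemma Set.Finite.exists_isBottommost (hfin : S.Finite) (hgen : GenPos S) (hne : S.Nonempty) :
    ∃ b, IsBottommost S b := by
  obtain ⟨b, hb, hmin⟩ := Set.exists_min_image S (·.2) hfin hne
  exact ⟨b, hb, fun p hp hpb => (hmin p hp).lt_of_ne (hgen.2 p hp b hb hpb).2.symm⟩

lemma Set.Finite.exists_isTopmost (hfin : S.Finite) (hgen : GenPos S) (hne : S.Nonempty) :
    ∃ t, IsTopmost S t := by
  obtain ⟨t, ht, hmax⟩ := Set.exists_max_image S (·.2) hfin hne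
  exact ⟨t, ht, fun p hp hpt => (hmax p hp).lt_of_ne (hgen.2 p hp t ht hpt).2⟩

lemma Set.Finite.exists_isLeftmost (hfin : S.Finite) (hgen : GenPos S) (hne : S.Nonempty) :
    ∃ l, IsLeftmost S l := by
  obtain ⟨l, hl, hmin⟩ := Set.exists_min_image S (·.1) hfin hne
  exact ⟨l, hl, fun p hp hpl => (hmin p hp).lt_of_ne (hgen.2 p hp l hl hpl).1.symm⟩

lemma IsBottommost.snd_le {b p : ℝ × ℝ} (hb : IsBottommost S b) (hp : p ∈ S) : b.2 ≤ p.2 := by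
  rcases eq_or_ne p b with rfl | hpb
  exacts [le_rfl, (hb.2 p hp hpb).le]

lemma IsTopmost.snd_le {t p : ℝ × ℝ} (ht : IsTopmost S t) (hp : p ∈ S) : p.2 ≤ t.2 := by
  rcases eq_or_ne p t with rfl | hpt
  exacts [le_rfl, (ht.2 p hp hpt).le]

end Extreme

lemma GenPos.mono {S T : Set (ℝ × ℝ)} (hST : T ⊆ S) (hS : GenPos S) : GenPos T :=
  ⟨fun p hp q hq r hr => hS.1 p (hST hp) q (hST hq) r (hST hr),
    fun p hp q hq => hS.2 p (hST hp) q (hST hq)⟩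

lemma ConvexPos.mono {S T : Set (ℝ × ℝ)} (hST : T ⊆ S) (hS : ConvexPos S) : ConvexPos T :=
  ConvexIndependent.mono hS hST

section RightSided

variable {S : Set (ℝ × ℝ)} {b t : ℝ × ℝ}

/-- The horizontal line through `q` meets the segment `b t` to the left of `q`; if `q` were
to the left of the segment `a c`, it would meet that segment to the right of `q`, putting `q`
in the convex hull of the other points. -/
lemma RightSided.cross_neg_of_between (hconv : ConvexPos S) (hgen : GenPos S)
    (hside : RightSided S b t) {a c q : ℝ × ℝ} (ha : a ∈ S) (hc : c ∈ S) (hq : q ∈ S)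
    (haq : a.2 < q.2) (hqc : q.2 < c.2) : cross a c q < 0 := by
  obtain ⟨hb, ht, hright⟩ := hside
  have hbq : b.2 < q.2 := (hb.snd_le ha).trans_lt haq
  have hqt : q.2 < t.2 := hqc.trans_le (ht.snd_le hc)
  have hbtq : cross b t q < 0 :=
    hright q hq (by rintro rfl; simp at hbq) (by rintro rfl; simp at hqt)
  have hacq : cross a c q ≠ 0 := fun h => hgen.1 a ha c hc q hq
    (by rintro rfl; linarith) (by rintro rfl; simp at haq) (by rintro rfl; simp at hqc)
    (collinear_of_cross_eq_zero (haq.trans hqc).ne h)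
  by_contra! hpos
  obtain ⟨p, hp, hpq, hpx⟩ := exists_mem_segment_snd_eq hbq.le hqt.le (hbq.trans hqt)
  obtain ⟨p', hp', hp'q, hp'x⟩ := exists_mem_segment_snd_eq haq.le hqc.le (haq.trans hqc)
  have hpq₁ : p.1 < q.1 := by nlinarith
  have hqp'₁ : q.1 < p'.1 := by nlinarith [lt_of_le_of_ne hpos (Ne.symm hacq)]
  have hmem : ∀ x ∈ S, x.2 ≠ q.2 → x ∈ S \ {q} := fun x hx hxq => ⟨hx, by rintro rfl; simp at hxq⟩
  have hhull : segment ℝ p p' ⊆ convexHull ℝ (S \ {q}) :=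
    (convex_convexHull ℝ _).segment_subset
      (segment_subset_convexHull (hmem b hb.1 hbq.ne) (hmem t ht.1 hqt.ne') hp)
      (segment_subset_convexHull (hmem a ha haq.ne) (hmem c hc hqc.ne') hp')
  exact convexIndependent_set_iff_notMem_convexHull_sdiff.1 hconv q hq
    (hhull (mem_segment_of_snd_eq hpq hp'q hpq₁.le hqp'₁.le))

lemma RightSided.bottom_ne_top_of_mem (hside : RightSided S b t) {p : ℝ × ℝ} (hp : p ∈ S)
    (hpb : p ≠ b) : b ≠ t := by
  rintro rfl
  linarith [hside.1.2 p hp hpb, hside.2.1.2 p hp hpb]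

lemma RightSided.hullConsecutive_bottom_top (hside : RightSided S b t) (hbt : b ≠ t) :
    HullConsecutive S b t :=
  ⟨hside.1.1, hside.2.1.1, hbt, Or.inr hside.2.2⟩

lemma RightSided.hullConsecutive_top_bottom (hside : RightSided S b t) (hbt : b ≠ t) :
    HullConsecutive S t b :=
  ⟨hside.2.1.1, hside.1.1, hbt.symm, Or.inl fun r hr hrt hrb => by
    rw [cross_swap]; linarith [hside.2.2 r hr hrb hrt]⟩

lemma RightSided.sdiff_bottom (hconv : ConvexPos S) (hgen : GenPos S)
    (hside : RightSided S b t) {b' : ℝ × ℝ} (hb' : IsBottommost (S \ {b}) b') :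
    RightSided (S \ {b}) b' t ∧ HullConsecutive S b b' := by
  obtain ⟨⟨hb'S, hb'b⟩, hb'low⟩ := hb'
  have hbt : b ≠ t := hside.bottom_ne_top_of_mem hb'S hb'b
  have hbb' : b.2 < b'.2 := hside.1.2 b' hb'S hb'b
  refine ⟨⟨⟨⟨hb'S, hb'b⟩, hb'low⟩, ⟨⟨hside.2.1.1, hbt.symm⟩, fun p hp => hside.2.1.2 p hp.1⟩,
    fun q hq hqb' hqt => ?_⟩, ⟨hside.1.1, hb'S, Ne.symm hb'b, Or.inl fun r hr hrb hrb' => ?_⟩⟩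
  · exact hside.cross_neg_of_between hconv hgen hb'S hside.2.1.1 hq.1 (hb'low q hq hqb')
      (hside.2.1.2 q hq.1 hqt)
  · have := hside.cross_neg_of_between hconv hgen hside.1.1 hr hb'S hbb'
      (hb'low r ⟨hr, hrb⟩ hrb')
    linarith [cross_swap_right b r b']

lemma RightSided.sdiff_top (hconv : ConvexPos S) (hgen : GenPos S)
    (hside : RightSided S b t) {t' : ℝ × ℝ} (ht' : IsTopmost (S \ {t}) t') :
    RightSided (S \ {t}) b t' ∧ HullConsecutive S t t' := by
  obtain ⟨⟨ht'S, ht't⟩, ht'high⟩ := ht'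
  have hbt : b ≠ t := by rintro rfl; exact hside.bottom_ne_top_of_mem ht'S ht't rfl
  have htt' : t'.2 < t.2 := hside.2.1.2 t' ht'S ht't
  refine ⟨⟨⟨⟨hside.1.1, hbt⟩, fun p hp => hside.1.2 p hp.1⟩, ⟨⟨ht'S, ht't⟩, ht'high⟩,
    fun q hq hqb hqt' => ?_⟩, ⟨hside.2.1.1, ht'S, Ne.symm ht't, Or.inr fun r hr hrt hrt' => ?_⟩⟩
  · exact hside.cross_neg_of_between hconv hgen hside.1.1 ht'S hq.1 (hside.1.2 q hq.1 hqb)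
      (ht'high q hq hqt')
  · have := hside.cross_neg_of_between hconv hgen hr hside.2.1.1 ht'S
      (ht'high r ⟨hr, hrt⟩ hrt') htt'
    rwa [cross_rotate]

lemma RightSided.exists_rightSided_sdiff (hfin : S.Finite) (hconv : ConvexPos S)
    (hgen : GenPos S) (hside : RightSided S b t) {v : ℝ × ℝ} (hv : v = b ∨ v = t)
    (hne : (S \ {v}).Nonempty) :
    ∃ b' t', RightSided (S \ {v}) b' t' ∧ HullConsecutive S v b' ∧ HullConsecutive S v t' := by
  rcases hv with rfl | rfl
  · obtain ⟨b', hb'⟩ := hfin.sdiff.exists_isBottommost (hgen.mono Set.sdiff_subset) hne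
    obtain ⟨hside', hvb'⟩ := hside.sdiff_bottom hconv hgen hb'
    exact ⟨b', t, hside', hvb',
      hside.hullConsecutive_bottom_top (hside.bottom_ne_top_of_mem hb'.1.1 hb'.1.2)⟩
  · obtain ⟨t', ht'⟩ := hfin.sdiff.exists_isTopmost (hgen.mono Set.sdiff_subset) hne
    obtain ⟨hside', hvt'⟩ := hside.sdiff_top hconv hgen ht'
    have hbv : b ≠ v := by rintro rfl; exact hside.bottom_ne_top_of_mem ht'.1.1 ht'.1.2 rfl
    exact ⟨b, t', hside', hside.hullConsecutive_top_bottom hbv, hvt'⟩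

lemma RightSided.eq_or_eq_of_isLeftmost (hside : RightSided S b t) {l : ℝ × ℝ}
    (hl : IsLeftmost S l) : l = b ∨ l = t := by
  by_contra! hlbt
  obtain ⟨hlb, hlt⟩ := hlbt
  have hbl := hside.1.2 l hl.1 hlb
  have hlt' := hside.2.1.2 l hl.1 hlt
  have hlb₁ := hl.2 b hside.1.1 hlb.symm
  have hlt₁ := hl.2 t hside.2.1.1 hlt.symm
  have : cross b t l = (t.1 - l.1) * (l.2 - b.2) + (b.1 - l.1) * (t.2 - l.2) := by
    unfold cross; ring
  nlinarith [hside.2.2 l hl.1 hlb hlt, mul_pos (sub_pos.2 hlt₁) (sub_pos.2 hbl),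
    mul_pos (sub_pos.2 hlb₁) (sub_pos.2 hlt')]

lemma RightSided.exists_start (hfin : S.Finite) (hgen : GenPos S) (hside : RightSided S b t)
    {δ : Dir} (hδ : δ ≠ Dir.L) :
    ∃ v, (v = b ∨ v = t) ∧ (∀ q ∈ S, q ≠ v → dirOk δ v q) ∧
      (δ = Dir.U → v = b) ∧ (δ = Dir.D → v = t) ∧ (δ = Dir.R → IsLeftmost S v) := by
  cases δ with
  | U => exact ⟨b, Or.inl rfl, hside.1.2, fun _ => rfl, by simp, by simp⟩
  | D => exact ⟨t, Or.inr rfl, hside.2.1.2, by simp, fun _ => rfl, by simp⟩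
  | L => exact absurd rfl hδ
  | R =>
    obtain ⟨l, hl⟩ := hfin.exists_isLeftmost hgen ⟨b, hside.1.1⟩
    exact ⟨l, hside.eq_or_eq_of_isLeftmost hl, hl.2, by simp, by simp, fun _ => hl⟩

theorem RightSided.exists_pdce_from {m : ℕ} {d : Fin m → Dir} (hd : ∀ i, d i ≠ Dir.L)
    (hfin : S.Finite) (hcard : S.ncard = m + 1) (hconv : ConvexPos S) (hgen : GenPos S)
    (hside : RightSided S b t) {v : ℝ × ℝ} (hv : v = b ∨ v = t)
    (hstart : ∀ h : 0 < m, ∀ q ∈ S, q ≠ v → dirOk (d ⟨0, h⟩) v q) :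
    ∃ E : Fin (m + 1) → ℝ × ℝ, PDCE d E S ∧ E 0 = v := by
  have hvS : v ∈ S := by rcases hv with rfl | rfl; exacts [hside.1.1, hside.2.1.1]
  induction m generalizing S b t v with
  | zero =>
    obtain ⟨a, rfl⟩ := Set.ncard_eq_one.1 hcard
    obtain rfl : v = a := hvS
    exact ⟨fun _ => v, ⟨⟨fun i j _ => Subsingleton.elim (α := Fin 1) i j, Set.range_const⟩,
      finZeroElim, finZeroElim, finZeroElim⟩, rfl⟩
  | succ m ih =>
    have hcard' : (S \ {v}).ncard = m + 1 := by
      rw [Set.ncard_sdiff_singleton_of_mem hvS, hcard]; rfl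
    have hne : (S \ {v}).Nonempty := Set.nonempty_of_ncard_ne_zero (by omega)
    obtain ⟨b', t', hside', hvb', hvt'⟩ := hside.exists_rightSided_sdiff hfin hconv hgen hv hne
    obtain ⟨w, hw, hwstart⟩ : ∃ w, (w = b' ∨ w = t') ∧
        ∀ h : 0 < m, ∀ q ∈ S \ {v}, q ≠ w → dirOk (d ⟨1, by omega⟩) w q := by
      rcases Nat.eq_zero_or_pos m with rfl | hm
      · exact ⟨b', Or.inl rfl, fun h => absurd h (lt_irrefl 0)⟩
      · obtain ⟨w, hw, hwdir, -⟩ :=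
          hside'.exists_start hfin.sdiff (hgen.mono Set.sdiff_subset) (hd ⟨1, by omega⟩)
        exact ⟨w, hw, fun _ => hwdir⟩
    have hwS : w ∈ S \ {v} := by rcases hw with rfl | rfl; exacts [hside'.1.1, hside'.2.1.1]
    obtain ⟨E, hE, rfl⟩ := ih (fun i => hd i.succ) hfin.sdiff hcard' (hconv.mono Set.sdiff_subset)
      (hgen.mono Set.sdiff_subset) hside' hw hwstart hwS
    exact ⟨Fin.cons v E, hE.cons hvS (hstart (by omega) _ hwS.1 hwS.2)
      (hw.elim (· ▸ hvb') (· ▸ hvt')), rfl⟩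

end RightSided

/-- any {U,D,R}-path has a PDCE on a right-sided convex point set, with the
first vertex on b(S), t(S), or the leftmost point (which is t(S) or b(S)),
according to the first label. -/
theorem rightSided_UDR_pdce {m : ℕ} (hm : 0 < m) (d : Fin m → Dir)
    (hd : ∀ i, d i ≠ Dir.L) (S : Set (ℝ × ℝ)) (hfin : S.Finite)
    (hcard : S.ncard = m + 1) (hconv : ConvexPos S) (hgen : GenPos S)
    (b t : ℝ × ℝ) (hside : RightSided S b t) :
    ∃ E : Fin (m + 1) → ℝ × ℝ, PDCE d E S ∧
      (d ⟨0, hm⟩ = Dir.U → E 0 = b) ∧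
      (d ⟨0, hm⟩ = Dir.D → E 0 = t) ∧
      (d ⟨0, hm⟩ = Dir.R → IsLeftmost S (E 0) ∧ (E 0 = t ∨ E 0 = b)) := by
  obtain ⟨v, hv, hvdir, hU, hD, hR⟩ := hside.exists_start hfin hgen (hd ⟨0, hm⟩)
  obtain ⟨E, hE, rfl⟩ := hside.exists_pdce_from hd hfin hcard hconv hgen hv fun _ => hvdir
  exact ⟨E, hE, hU, hD, fun h => ⟨hR h, hv.symm⟩⟩
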